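/- For any finite sequence τ of distinct natural numbers and any natural number k not occurring in τ, des f(k,τ) ≥ des τ. -/

import Mathlib

/-!
Induct on `τ` along the recursion defining `f`, writing `τ = α m β` with `m` the smallest letter.
If `k < m` then `f(k,τ) = kτ`, and prefixing a letter never removes a descent. Otherwise `m < k`.
If `α = ∅`, the letter `m` in front of `β` starts no descent, so `des τ = des β`. If `β = ∅`, appending
`m` to `α` creates at most one descent, which `k m α` regains at `k > m`. In the general case all
letters of `f(k,α)` exceed `m`, so the descent in front of `m` is always present in `f(k,α) m β`,
and by induction `des α ≤ des f(k,α)`.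
-/

namespace PaperStats

/-- `des w` is the number of descents of the word `w` (0-indexed positions `i`
with `w(i) > w(i+1)`). -/
def des (w : List ℕ) : ℕ :=
  ((Finset.range (w.length - 1)).filter fun i => w.getD (i + 1) 0 < w.getD i 0).card

/-- `inv w` is the number of inversions of the word `w`: pairs of positions
`i < j` with `w(i) > w(j)`. -/
def inv (w : List ℕ) : ℕ :=
  ((Finset.range w.length ×ˢ Finset.range w.length).filter
    fun p => p.1 < p.2 ∧ w.getD p.2 0 < w.getD p.1 0).card

/-- An inversion `(i,j)` of `w` is admissible if either `w(j) < w(j+1)`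
(`j` is not the last position and is followed by an ascent), or there is a
position `k` strictly between `i` and `j` with `w(j) > w(k)`. -/
def IsAdmissible (w : List ℕ) (i j : ℕ) : Prop :=
  (j + 1 < w.length ∧ w.getD j 0 < w.getD (j + 1) 0) ∨
    ∃ k, i < k ∧ k < j ∧ w.getD k 0 < w.getD j 0

instance (w : List ℕ) (i j : ℕ) : Decidable (IsAdmissible w i j) :=
  decidable_of_iff ((j + 1 < w.length ∧ w.getD j 0 < w.getD (j + 1) 0) ∨
      ∃ k ∈ Finset.Ioo i j, w.getD k 0 < w.getD j 0) (by
    unfold IsAdmissible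
    simp only [Finset.mem_Ioo, and_assoc])

/-- `ai w` is the number of admissible inversions of `w`. -/
def ai (w : List ℕ) : ℕ :=
  ((Finset.range w.length ×ˢ Finset.range w.length).filter
    fun p => p.1 < p.2 ∧ w.getD p.2 0 < w.getD p.1 0 ∧ IsAdmissible w p.1 p.2).card

/-- `aid w = ai w + des w`. -/
def aid (w : List ℕ) : ℕ := ai w + des w

/-- The statistic `aix`, defined recursively: `aix ∅ = 0`; writing a nonempty
word as `π = α m β`, where `m` is the smallest letter and `α` is the maximal
prefix not containing `m`, one has `aix π = 1 + aix β` if `α = ∅`,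
`aix π = 0` if `β = ∅` (and `α ≠ ∅`), and `aix π = aix α` otherwise. -/
def aix : List ℕ → ℕ
  | [] => 0
  | x :: xs =>
    if (x :: xs).takeWhile (fun a => decide (a ≠ xs.foldr min x)) = [] then
      1 + aix (((x :: xs).dropWhile (fun a => decide (a ≠ xs.foldr min x))).tail)
    else if ((x :: xs).dropWhile (fun a => decide (a ≠ xs.foldr min x))).tail = [] then 0
    else aix ((x :: xs).takeWhile (fun a => decide (a ≠ xs.foldr min x)))
termination_by w => w.length
decreasing_by
  all_goals simp only [List.foldr_attach (f := min)] at *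
  · have h1 := (List.dropWhile_sublist (l := x :: xs) (fun a => decide (a ≠ xs.foldr min x))).length_le
    have h2 := List.length_tail (l := (x :: xs).dropWhile (fun a => decide (a ≠ xs.foldr min x)))
    simp only [List.length_cons] at *
    omega
  · rename_i hα hβ
    have h0 : ((x :: xs).takeWhile (fun a => decide (a ≠ xs.foldr min x))) ++
        ((x :: xs).dropWhile (fun a => decide (a ≠ xs.foldr min x))) = x :: xs :=
      List.takeWhile_append_dropWhile ..
    have h1 : ((x :: xs).dropWhile (fun a => decide (a ≠ xs.foldr min x))) ≠ [] := by
      intro h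
      apply hβ
      rw [h]
      rfl
    have h2 := congrArg List.length h0
    simp only [List.length_append, List.length_cons] at h2
    have h3 : 0 < ((x :: xs).dropWhile (fun a => decide (a ≠ xs.foldr min x))).length :=
      List.length_pos_iff.mpr h1
    simp only [List.length_cons]
    omega

/-- The map `f(k,τ)`: with `m` the smallest letter of `τ` together with `k`
(`k` not occurring in `τ`), and `τ = α m β` with `α` the maximal prefix of `τ`
avoiding `m`: `f(k,∅) = k`; `f(k,τ) = kτ` if `k = m`; and for `k > m`,
`f(k,τ) = f(k,β) m` if `α = ∅`, `f(k,τ) = k m α` if `β = ∅`, and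
`f(k,τ) = f(k,α) m β` otherwise. -/
def fkt (k : ℕ) : List ℕ → List ℕ
  | [] => [k]
  | x :: xs =>
    if k < xs.foldr min x then k :: x :: xs
    else if (x :: xs).takeWhile (fun a => decide (a ≠ xs.foldr min x)) = [] then
      fkt k (((x :: xs).dropWhile (fun a => decide (a ≠ xs.foldr min x))).tail) ++
        [xs.foldr min x]
    else if ((x :: xs).dropWhile (fun a => decide (a ≠ xs.foldr min x))).tail = [] then
      k :: xs.foldr min x :: ((x :: xs).takeWhile (fun a => decide (a ≠ xs.foldr min x)))
    else
      fkt k ((x :: xs).takeWhile (fun a => decide (a ≠ xs.foldr min x))) ++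
        xs.foldr min x :: ((x :: xs).dropWhile (fun a => decide (a ≠ xs.foldr min x))).tail
termination_by w => w.length
decreasing_by
  all_goals simp only [List.foldr_attach (f := min)] at *
  · have h1 := (List.dropWhile_sublist (l := x :: xs) (fun a => decide (a ≠ xs.foldr min x))).length_le
    have h2 := List.length_tail (l := (x :: xs).dropWhile (fun a => decide (a ≠ xs.foldr min x)))
    simp only [List.length_cons] at *
    omega
  · rename_i hk hα hβ
    have h0 : ((x :: xs).takeWhile (fun a => decide (a ≠ xs.foldr min x))) ++
        ((x :: xs).dropWhile (fun a => decide (a ≠ xs.foldr min x))) = x :: xs :=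
      List.takeWhile_append_dropWhile ..
    have h1 : ((x :: xs).dropWhile (fun a => decide (a ≠ xs.foldr min x))) ≠ [] := by
      intro h
      apply hβ
      rw [h]
      rfl
    have h2 := congrArg List.length h0
    simp only [List.length_append, List.length_cons] at h2
    have h3 : 0 < ((x :: xs).dropWhile (fun a => decide (a ≠ xs.foldr min x))).length :=
      List.length_pos_iff.mpr h1
    simp only [List.length_cons]
    omega

/-- `ini w` is the first letter of `w`. -/
def ini (w : List ℕ) : ℕ := w.headD 0

/-- The word of a permutation `π ∈ S_n`, namely `π(1) π(2) … π(n)`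
(with values in `{1, …, n}`). -/
def permList {n : ℕ} (π : Equiv.Perm (Fin n)) : List ℕ :=
  List.ofFn fun i => (π i : ℕ) + 1

/-- The bijection `φ`: `φ(π) = f(π(1), f(π(2), ⋯ f(π(n), ∅) ⋯ ))`. -/
def phiW (w : List ℕ) : List ℕ := w.foldr fkt []

/-- Helper: `decRun l` splits `l` into its maximal weakly decreasing prefix
and the rest. -/
def decRun : List ℕ → List ℕ × List ℕ
  | [] => ([], [])
  | [x] => ([x], [])
  | x :: y :: rest =>
    if y ≤ x then ((x :: (decRun (y :: rest)).1), (decRun (y :: rest)).2)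
    else ([x], y :: rest)

theorem decRun_append : ∀ l : List ℕ, (decRun l).1 ++ (decRun l).2 = l
  | [] => rfl
  | [x] => rfl
  | x :: y :: rest => by
    rw [decRun]
    split
    · simpa using decRun_append (y :: rest)
    · rfl

/-- Helper computing the hook factorization of a word from its reversal: the
rightmost hook of the word starts at its rightmost descent top, i.e. it is
obtained by extending the maximal weakly decreasing prefix of the reversed word
by one more letter; the process is repeated on what remains, and when no
letters usable for a hook remain the word left over is the increasing part
`π₀`. The result is `(π₀, [π₁, …, π_k])`. -/
def hookRev (r : List ℕ) : List ℕ × List (List ℕ) :=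
  match h : (decRun r).2 with
  | [] => (r.reverse, [])
  | z :: rest =>
    ((hookRev rest).1, (hookRev rest).2 ++ [z :: (decRun r).1.reverse])
termination_by r.length
decreasing_by
  have h2 := congrArg List.length (decRun_append r)
  rw [h] at h2
  simp only [List.length_append, List.length_cons] at h2
  omega

/-- The hook factorization `(π₀, [π₁, …, π_k])` of a word
`w = π₀ π₁ ⋯ π_k`, where `π₀` is increasing and each `π_i`, `i ≥ 1`, is a
hook. -/
def hookSplit (w : List ℕ) : List ℕ × List (List ℕ) := hookRev w.reverse

/-- `pix w` is the length of the initial increasing factor `π₀` in the hook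
factorization of `w`. -/
def pix (w : List ℕ) : ℕ := (hookSplit w).1.length

/-- `lec w` is the sum of the numbers of inversions of the hooks in the hook
factorization of `w`. -/
def lec (w : List ℕ) : ℕ := ((hookSplit w).2.map inv).sum

/-- A word `w(1) … w(r)` with `r ≥ 2` is a hook if
`w(1) > w(2) ≤ w(3) ≤ ⋯ ≤ w(r)`. -/
def IsHook (w : List ℕ) : Prop :=
  ∃ a b rest, w = a :: b :: rest ∧ b < a ∧ List.Chain' (· ≤ ·) (b :: rest)

/-- `w(i)` is a left-to-right maximum of `w` if `w(k) < w(i)` for all `k < i`. -/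
def IsLRMax (w : List ℕ) (i : ℕ) : Prop := ∀ k < i, w.getD k 0 < w.getD i 0

instance (w : List ℕ) (i : ℕ) : Decidable (IsLRMax w i) := by
  unfold IsLRMax; infer_instance

/-- `mix w` counts the pairs of positions `i < j` such that either
`w(i) > w(j)` and `w(i)` is a left-to-right maximum, or `w(i) < w(j)` and
there is `k < i` with `w(k) > w(j)`. -/
def mix (w : List ℕ) : ℕ :=
  ((Finset.range w.length ×ˢ Finset.range w.length).filter fun p =>
    p.1 < p.2 ∧ ((w.getD p.2 0 < w.getD p.1 0 ∧ IsLRMax w p.1) ∨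
      (w.getD p.1 0 < w.getD p.2 0 ∧ ∃ k ∈ Finset.range p.1, w.getD p.2 0 < w.getD k 0))).card

/-- `das w` counts the positions `i` such that either `w(i) > w(i+1)` and
`w(i)` is a left-to-right maximum, or `w(i) < w(i+1)` and there is `k < i`
with `w(k) > w(i+1)`. -/
def das (w : List ℕ) : ℕ :=
  ((Finset.range (w.length - 1)).filter fun i =>
    (w.getD (i + 1) 0 < w.getD i 0 ∧ IsLRMax w i) ∨
      (w.getD i 0 < w.getD (i + 1) 0 ∧ ∃ k ∈ Finset.range i, w.getD (i + 1) 0 < w.getD k 0)).card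

/-- The values of the left-to-right maxima of a word, listed in increasing
order (which is also their order of occurrence). -/
def lrMaxima : List ℕ → List ℕ
  | [] => []
  | x :: xs => x :: lrMaxima (xs.filter fun a => decide (x < a))
termination_by l => l.length
decreasing_by
  have := xs.length_filter_le (fun a => decide (x < a))
  rw [List.unattach_filter (g := fun a => decide (x < a)) (hf := fun _ _ => rfl), List.unattach_attach]
  simp only [List.length_cons]
  omega

/-- `Bset w m` is the list of entries of `w` that are smaller than `m` and lie
to the right of (the first occurrence of) `m` in `w`. -/
def Bset (w : List ℕ) (m : ℕ) : List ℕ :=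
  ((w.dropWhile fun a => decide (a ≠ m)).tail).filter fun a => decide (a < m)

/-- Helper for `psiS`: replace the letters satisfying `P`, in order, by the
letters of the first list. -/
def replaceSub (P : ℕ → Bool) : List ℕ → List ℕ → List ℕ
  | _, [] => []
  | rs, x :: xs =>
    if P x then rs.headD x :: replaceSub P rs.tail xs else x :: replaceSub P rs xs

/-- `psiS S w` is `ψ_S(w)`: the result of reversing, in place, the subword of
`w` consisting of the entries belonging to `S`. -/
def psiS (S : List ℕ) (w : List ℕ) : List ℕ :=
  replaceSub (fun a => decide (a ∈ S)) ((w.filter fun a => decide (a ∈ S)).reverse) w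

/-- Helper applying the alternating composition
`ψ_{B₁} ∘ ψ_{B₂ ∩ B₁} ∘ ψ_{B₂} ∘ ⋯ ∘ ψ_{B_{k-1}} ∘ ψ_{B_k ∩ B_{k-1}} ∘ ψ_{B_k}`
to `w`, given the list `[B_k, B_{k-1}, …, B₁]`. -/
def psiChain : List (List ℕ) → List ℕ → List ℕ
  | [], w => w
  | [B], w => psiS B w
  | B :: B' :: rest, w => psiChain (B' :: rest) (psiS (B.inter B') (psiS B w))

/-- The Brändén–Claesson bijection `ψ`. -/
def psi (w : List ℕ) : List ℕ :=
  psiChain (((lrMaxima w).map (Bset w)).reverse) w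

lemma des_cons_cons (x y : ℕ) (l : List ℕ) :
    des (x :: y :: l) = des (y :: l) + if y < x then 1 else 0 := by
  unfold des
  rw [Finset.card_filter, Finset.card_filter]
  simp only [List.length_cons, Nat.add_sub_cancel]
  rw [Finset.sum_range_succ']
  simp only [List.getD_cons_succ, List.getD_cons_zero]

lemma des_cons_le (x : ℕ) (l : List ℕ) : des l ≤ des (x :: l) := by
  cases l with
  | nil => exact Nat.zero_le _
  | cons y l => rw [des_cons_cons]; omega

lemma des_cons_of_forall_le {m : ℕ} {l : List ℕ} (h : ∀ a ∈ l, m ≤ a) :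
    des (m :: l) = des l := by
  cases l with
  | nil => rfl
  | cons y l => simp [des_cons_cons, Nat.not_lt.mpr (h y List.mem_cons_self)]

/-- The `getLastD 0` makes the identity hold for `u = []` as well. -/
lemma des_append_cons (u : List ℕ) (b : ℕ) (v : List ℕ) :
    des (u ++ b :: v) = des u + des (b :: v) + if b < u.getLastD 0 then 1 else 0 := by
  induction u with
  | nil => simp [des]
  | cons a u ih =>
    cases u with
    | nil =>
      rw [List.cons_append, List.nil_append, des_cons_cons, List.getLastD_cons, List.getLastD_nil,
        show des [a] = 0 from rfl, zero_add]
    | cons c u =>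
      simp only [List.cons_append, List.getLastD_cons] at ih ⊢
      rw [des_cons_cons, ih, des_cons_cons]
      omega

lemma des_append_singleton_le (u : List ℕ) (b : ℕ) : des (u ++ [b]) ≤ des u + 1 := by
  rw [des_append_cons, show des [b] = 0 from rfl]
  split <;> omega

lemma des_append_cons_le_of_lt_getLastD {u u' : List ℕ} {b : ℕ} (v : List ℕ)
    (hu : des u ≤ des u') (hb : b < u'.getLastD 0) : des (u ++ b :: v) ≤ des (u' ++ b :: v) := by
  rw [des_append_cons, des_append_cons, if_pos hb]
  split <;> omega

lemma des_le_des_append (u v : List ℕ) : des u ≤ des (u ++ v) := by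
  cases v with
  | nil => simp
  | cons b v => rw [des_append_cons]; omega

section LinearOrder

variable {X : Type*} [LinearOrder X]

lemma lt_getLastD_of_forall_lt {m : X} {l : List X} (hl : l ≠ []) (h : ∀ a ∈ l, m < a)
    (d : X) : m < l.getLastD d := by
  obtain ⟨y, l, rfl⟩ := List.exists_cons_of_ne_nil hl
  rw [List.getLastD_cons]
  exact h _ List.getLastD_mem_cons

lemma foldr_min_le (x : X) (xs : List X) : ∀ a ∈ x :: xs, xs.foldr min x ≤ a := by
  induction xs with
  | nil => simp
  | cons y ys ih =>
    simp only [List.mem_cons, List.foldr_cons, forall_eq_or_imp] at ih ⊢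
    exact ⟨(min_le_right _ _).trans ih.1, min_le_left _ _,
      fun a ha => (min_le_right _ _).trans (ih.2 a ha)⟩

lemma foldr_min_mem (x : X) (xs : List X) : xs.foldr min x ∈ x :: xs := by
  induction xs with
  | nil => simp
  | cons y ys ih =>
    rw [List.foldr_cons]
    rcases min_choice y (ys.foldr min x) with h | h <;> rw [h]
    · simp
    · simp only [List.mem_cons] at ih ⊢; tauto

lemma foldr_min_eq {x m : X} {xs : List X} (hm : m ∈ x :: xs) (hle : ∀ a ∈ x :: xs, m ≤ a) :
    xs.foldr min x = m :=
  le_antisymm (foldr_min_le x xs m hm) (hle _ (foldr_min_mem x xs))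

lemma exists_eq_append_min_cons {τ : List X} (hτ : τ ≠ []) :
    ∃ α m β, τ = α ++ m :: β ∧ m ∉ α ∧ ∀ a ∈ τ, m ≤ a := by
  obtain ⟨x, xs, rfl⟩ := List.exists_cons_of_ne_nil hτ
  obtain ⟨α, β, h, hα⟩ := List.eq_append_cons_of_mem (foldr_min_mem x xs)
  exact ⟨α, _, β, h, hα, foldr_min_le x xs⟩

end LinearOrder

lemma fkt_of_forall_lt {k : ℕ} {τ : List ℕ} (h : ∀ a ∈ τ, k < a) : fkt k τ = k :: τ := by
  cases τ with
  | nil => rw [fkt]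
  | cons x xs => rw [fkt, if_pos (h _ (foldr_min_mem x xs))]

lemma fkt_append_min_cons {k m : ℕ} {α β : List ℕ} (hmk : m ≤ k) (hmα : m ∉ α)
    (hmin : ∀ a ∈ α ++ m :: β, m ≤ a) :
    fkt k (α ++ m :: β) =
      if α = [] then fkt k β ++ [m]
      else if β = [] then k :: m :: α
      else fkt k α ++ m :: β := by
  obtain ⟨x, xs, hτ⟩ := List.exists_cons_of_ne_nil (List.append_ne_nil_of_right_ne_nil α
    (List.cons_ne_nil m β))
  have hm : xs.foldr min x = m :=
    foldr_min_eq (hτ ▸ List.mem_append_right α List.mem_cons_self) (hτ ▸ hmin)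
  have htake : (α ++ m :: β).takeWhile (fun a => decide (a ≠ m)) = α := by
    rw [List.takeWhile_append_of_pos fun a ha => by simpa using fun h : a = m => hmα (h ▸ ha)]
    simp
  have hdrop : (α ++ m :: β).dropWhile (fun a => decide (a ≠ m)) = m :: β := by
    rw [List.dropWhile_append_of_pos fun a ha => by simpa using fun h : a = m => hmα (h ▸ ha)]
    simp
  rw [hτ, fkt, hm, if_neg (Nat.not_lt.mpr hmk), ← hτ, htake, hdrop, List.tail_cons]

theorem fkt_perm (k : ℕ) (τ : List ℕ) : (fkt k τ).Perm (k :: τ) := by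
  by_cases hk : ∀ a ∈ τ, k < a
  · rw [fkt_of_forall_lt hk]
  obtain ⟨α, m, β, rfl, hmα, hmin⟩ := exists_eq_append_min_cons (τ := τ) (by rintro rfl; simp at hk)
  push Not at hk
  obtain ⟨a, ha, hak⟩ := hk
  rw [fkt_append_min_cons ((hmin a ha).trans hak) hmα hmin]
  split_ifs with hα hβ
  · subst hα
    exact ((fkt_perm k β).append_right [m]).trans ((List.perm_append_singleton m β).cons k)
  · subst hβ
    exact ((List.perm_append_singleton m α).symm).cons k
  · exact (fkt_perm k α).append_right (m :: β)
termination_by τ.length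
decreasing_by
  all_goals subst_vars; simp only [List.length_append, List.length_cons, List.length_nil]; omega

lemma fkt_ne_nil (k : ℕ) (τ : List ℕ) : fkt k τ ≠ [] :=
  List.ne_nil_of_mem ((fkt_perm k τ).mem_iff.mpr List.mem_cons_self)

/-- `des f(k,τ) ≥ des τ`. -/
theorem des_fkt_ge (k : ℕ) (τ : List ℕ) (hk : k ∉ τ) :
    des τ ≤ des (fkt k τ) := by
  by_cases hlt : ∀ a ∈ τ, k < a
  · rw [fkt_of_forall_lt hlt]
    exact des_cons_le k τ
  obtain ⟨α, m, β, rfl, hmα, hmin⟩ := exists_eq_append_min_cons (τ := τ) (by rintro rfl; simp at hlt)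
  have hmk : m < k := by
    push Not at hlt
    obtain ⟨a, ha, hak⟩ := hlt
    exact lt_of_le_of_ne ((hmin a ha).trans hak) fun h => hk (h ▸ by simp)
  rw [fkt_append_min_cons hmk.le hmα hmin]
  split_ifs with hα hβ
  · subst hα
    calc des ([] ++ m :: β) = des β := des_cons_of_forall_le fun a ha => hmin a (by simp [ha])
      _ ≤ des (fkt k β) := des_fkt_ge k β fun h => hk (by simp [h])
      _ ≤ des (fkt k β ++ [m]) := des_le_des_append _ _
  · subst hβ
    calc des (α ++ [m]) ≤ des α + 1 := des_append_singleton_le α m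
      _ ≤ des (m :: α) + 1 := by grw [← des_cons_le]
      _ = des (k :: m :: α) := by rw [des_cons_cons, if_pos hmk]
  · have hlast : m < (fkt k α).getLastD 0 := by
      refine lt_getLastD_of_forall_lt (fkt_ne_nil k α) (fun a ha => ?_) 0
      rcases List.mem_cons.mp ((fkt_perm k α).mem_iff.mp ha) with rfl | ha
      exacts [hmk, lt_of_le_of_ne (hmin a (List.mem_append_left _ ha)) fun h => hmα (h ▸ ha)]
    exact des_append_cons_le_of_lt_getLastD β
      (des_fkt_ge k α fun h => hk (List.mem_append_left _ h)) hlast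
termination_by τ.length
decreasing_by
  all_goals subst_vars; simp only [List.length_append, List.length_cons, List.length_nil]; omega

end PaperStats
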